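/- arXiv:math/0405021 — 3 statements merged into one kernel-verified Lean document; each statement's English description precedes it below -/
import Mathlib

section
/- Let k be a field and n ≥ 1. Let R be the k-subalgebra of the polynomial ring k[x₁,…,x_{2n}] generated by the monomials x_i·x_j for 1 ≤ i ≤ j ≤ 2n, and let p = R ∩ x₁·k[x₁,…,x_{2n}]. Then p is a nonzero prime ideal of R which is not a principal ideal; moreover, writing m for the ideal of R generated by all monomials x_i·x_j, the images of x₁x₁, x₁x₂, …, x₁x_{2n} in m/m² are linearly independent over k. -/
open MvPolynomial

set_option maxHeartbeats 1000000
set_option synthInstance.maxHeartbeats 1000000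

private lemma veronese_deg_add {N : ℕ} (a b : Fin N →₀ ℕ) :
    ((a + b).sum fun _ e => e) = (a.sum fun _ e => e) + (b.sum fun _ e => e) :=
  Finsupp.sum_add_index' (fun _ => rfl) (fun _ _ _ => rfl)

private lemma veronese_X_mul_X {k : Type*} [CommSemiring k] {N : ℕ} (i j : Fin N) :
    (X i * X j : MvPolynomial (Fin N) k)
      = monomial (Finsupp.single i 1 + Finsupp.single j 1) 1 := by
  rw [X, X, monomial_mul, mul_one]

private lemma veronese_even {k : Type*} [Field k] {N : ℕ} {f : MvPolynomial (Fin N) k}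
    (hf : f ∈ Algebra.adjoin k {p | ∃ i j : Fin N, p = X i * X j}) :
    ∀ d : Fin N →₀ ℕ, coeff d f ≠ 0 → Even (d.sum fun _ e => e) := by
  classical
  induction hf using Algebra.adjoin_induction with
  | mem x hx =>
    obtain ⟨i, j, rfl⟩ := hx
    intro d hd
    rw [veronese_X_mul_X, coeff_monomial] at hd
    split at hd
    · rename_i h
      rw [← h, veronese_deg_add, Finsupp.sum_single_index rfl, Finsupp.sum_single_index rfl]
      exact ⟨1, rfl⟩
    · exact absurd rfl hd
  | algebraMap r =>
    intro d hd
    rw [algebraMap_eq, coeff_C] at hd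
    split at hd
    · rename_i h
      rw [← h]
      simp
    · exact absurd rfl hd
  | add x y hx hy ihx ihy =>
    intro d hd
    rw [coeff_add] at hd
    by_cases h : coeff d x = 0
    · exact ihy d (by simpa [h] using hd)
    · exact ihx d h
  | mul x y hx hy ihx ihy =>
    intro d hd
    rw [coeff_mul] at hd
    obtain ⟨q, hq, hq0⟩ := Finset.exists_ne_zero_of_sum_ne_zero hd
    rw [Finset.HasAntidiagonal.mem_antidiagonal] at hq
    have h1 : coeff q.1 x ≠ 0 := left_ne_zero_of_mul hq0
    have h2 : coeff q.2 y ≠ 0 := right_ne_zero_of_mul hq0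
    rw [← hq, veronese_deg_add]
    exact (ihx _ h1).add (ihy _ h2)

private lemma veronese_m_coeff {k : Type*} [Field k] {N : ℕ}
    {R : Subalgebra k (MvPolynomial (Fin N) k)} {x : ↥R}
    (hx : x ∈ Ideal.span {r : ↥R | ∃ i j : Fin N, (r : MvPolynomial (Fin N) k) = X i * X j}) :
    ∀ d : Fin N →₀ ℕ, (d.sum fun _ e => e) < 2 → coeff d (x : MvPolynomial (Fin N) k) = 0 := by
  classical
  induction hx using Submodule.span_induction with
  | mem r hr =>
    obtain ⟨i, j, hij⟩ := hr
    intro d hd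
    rw [hij, veronese_X_mul_X, coeff_monomial]
    rw [if_neg]
    intro h
    rw [← h, veronese_deg_add, Finsupp.sum_single_index rfl, Finsupp.sum_single_index rfl] at hd
    omega
  | zero => intro d _; simp
  | add a b ha hb iha ihb =>
    intro d hd
    have hco : ((a + b : ↥R) : MvPolynomial (Fin N) k) = ↑a + ↑b := rfl
    rw [hco, coeff_add, iha d hd, ihb d hd, add_zero]
  | smul r a ha ih =>
    intro d hd
    have hco : ((r • a : ↥R) : MvPolynomial (Fin N) k) = ↑r * ↑a := rfl
    rw [hco, coeff_mul]
    apply Finset.sum_eq_zero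
    intro q hq
    rw [Finset.HasAntidiagonal.mem_antidiagonal] at hq
    have hdeg := veronese_deg_add q.1 q.2
    rw [hq] at hdeg
    have : (q.2.sum fun _ e => e) < 2 := by omega
    rw [ih q.2 this, mul_zero]

private lemma veronese_m2_coeff {k : Type*} [Field k] {N : ℕ}
    {R : Subalgebra k (MvPolynomial (Fin N) k)} {x : ↥R}
    (hx : x ∈ Ideal.span {r : ↥R | ∃ i j : Fin N, (r : MvPolynomial (Fin N) k) = X i * X j} *
          Ideal.span {r : ↥R | ∃ i j : Fin N, (r : MvPolynomial (Fin N) k) = X i * X j}) :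
    ∀ d : Fin N →₀ ℕ, (d.sum fun _ e => e) < 4 → coeff d (x : MvPolynomial (Fin N) k) = 0 := by
  classical
  refine Submodule.mul_induction_on hx ?_ ?_
  · intro a ha b hb d hd
    have hco : ((a * b : ↥R) : MvPolynomial (Fin N) k) = ↑a * ↑b := rfl
    rw [hco, coeff_mul]
    apply Finset.sum_eq_zero
    intro q hq
    rw [Finset.HasAntidiagonal.mem_antidiagonal] at hq
    have hdeg := veronese_deg_add q.1 q.2
    rw [hq] at hdeg
    rcases lt_or_ge (q.1.sum fun _ e => e) 2 with h | h
    · rw [veronese_m_coeff ha q.1 h, zero_mul]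
    · have h2 : (q.2.sum fun _ e => e) < 2 := by omega
      rw [veronese_m_coeff hb q.2 h2, mul_zero]
  · intro a b iha ihb d hd
    have hco : ((a + b : ↥R) : MvPolynomial (Fin N) k) = ↑a + ↑b := rfl
    rw [hco, coeff_add, iha d hd, ihb d hd, add_zero]

private lemma veronese_prime_X {k : Type*} [Field k] {N : ℕ} (hN : 0 < N) (i : Fin N) :
    Prime (X i : MvPolynomial (Fin N) k) := by
  obtain ⟨M, rfl⟩ : ∃ M, N = M + 1 := ⟨N - 1, by omega⟩
  let e := (renameEquiv k (Equiv.swap i 0)).trans (finSuccEquiv k M)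
  rw [← MulEquiv.prime_iff e]
  have he : e (X i) = Polynomial.X := by
    show finSuccEquiv k M (rename (Equiv.swap i 0) (X i)) = Polynomial.X
    rw [rename_X, Equiv.swap_apply_left]
    exact finSuccEquiv_X_zero
  show Prime (e (X i))
  rw [he]
  exact Polynomial.prime_X

set_option synthInstance.maxHeartbeats 1000000 in
/-- Let `R ⊆ k[x₁,…,x_{2n}]` be the `k`-subalgebra generated by the quadratic monomials
`x_i·x_j` (the coordinate ring of the cone over the second Veronese embedding of
`ℙ^{2n−1}`), and let `p = R ∩ x₁·k[x₁,…,x_{2n}]`. Then `p` is a nonzero prime ideal of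
`R` which is not principal; moreover, if `m ⊆ R` is the ideal generated by all the
`x_i·x_j`, then the images of `x₁x₁, …, x₁x_{2n}` in `m/m²` are linearly independent
over `k`. -/
theorem veronese_cone_divisor (k : Type*) [Field k] (n : ℕ) (hn : 1 ≤ n)
    (R : Subalgebra k (MvPolynomial (Fin (2 * n)) k))
    (hR : R = Algebra.adjoin k {p | ∃ i j : Fin (2 * n), p = X i * X j})
    (p : Ideal ↥R)
    (hp : p = Ideal.comap R.val.toRingHom
      (Ideal.span {(X (⟨0, by omega⟩ : Fin (2 * n)) : MvPolynomial (Fin (2 * n)) k)}))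
    (m : Ideal ↥R)
    (hm : m = Ideal.span
      {r : ↥R | ∃ i j : Fin (2 * n), (r : MvPolynomial (Fin (2 * n)) k) = X i * X j}) :
    p ≠ ⊥ ∧ p.IsPrime ∧ ¬ Submodule.IsPrincipal p ∧
    ∀ e : Fin (2 * n) → ↥R,
      (∀ j : Fin (2 * n),
        (e j : MvPolynomial (Fin (2 * n)) k) = X (⟨0, by omega⟩ : Fin (2 * n)) * X j) →
      ∀ c : Fin (2 * n) → k, (∑ j, c j • e j) ∈ m ^ 2 → ∀ j, c j = 0 := by
  classical
  set i0 : Fin (2 * n) := ⟨0, by omega⟩ with hi0def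
  have hXprime : Prime (X i0 : MvPolynomial (Fin (2 * n)) k) :=
    veronese_prime_X (by omega) i0
  have hmemR : ∀ i j : Fin (2 * n), (X i * X j : MvPolynomial (Fin (2 * n)) k) ∈ R := by
    intro i j
    rw [hR]
    exact Algebra.subset_adjoin ⟨i, j, rfl⟩
  refine ⟨?_, ?_, ?_, ?_⟩
  · -- p ≠ ⊥
    intro hbot
    have hq : (⟨X i0 * X i0, hmemR i0 i0⟩ : ↥R) ∈ p := by
      rw [hp]
      exact Ideal.mem_comap.mpr (Ideal.mem_span_singleton.mpr ⟨X i0, rfl⟩)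
    rw [hbot, Submodule.mem_bot] at hq
    have h0 : (X i0 * X i0 : MvPolynomial (Fin (2 * n)) k) = 0 := congrArg Subtype.val hq
    exact mul_ne_zero (X_ne_zero i0) (X_ne_zero i0) h0
  · -- p prime
    rw [hp]
    haveI : (Ideal.span {(X i0 : MvPolynomial (Fin (2 * n)) k)}).IsPrime :=
      (Ideal.span_singleton_prime (X_ne_zero i0)).mpr hXprime
    exact Ideal.IsPrime.comap _
  · -- p not principal
    rintro ⟨⟨g, hgspan⟩⟩
    have hgp : g ∈ p := hgspan ▸ Submodule.mem_span_singleton_self g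
    have hgd : (X i0 : MvPolynomial (Fin (2 * n)) k) ∣ ↑g := by
      rw [hp] at hgp
      exact Ideal.mem_span_singleton.mp (Ideal.mem_comap.mp hgp)
    obtain ⟨h, hh⟩ := hgd
    set i1 : Fin (2 * n) := ⟨1, by omega⟩ with hi1def
    have h01 : (⟨X i0 * X i1, hmemR i0 i1⟩ : ↥R) ∈ p := by
      rw [hp]
      exact Ideal.mem_comap.mpr (Ideal.mem_span_singleton.mpr ⟨X i1, rfl⟩)
    have h00 : (⟨X i0 * X i0, hmemR i0 i0⟩ : ↥R) ∈ p := by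
      rw [hp]
      exact Ideal.mem_comap.mpr (Ideal.mem_span_singleton.mpr ⟨X i0, rfl⟩)
    rw [hgspan, Submodule.mem_span_singleton] at h01 h00
    obtain ⟨a, ha⟩ := h01
    obtain ⟨b, hb⟩ := h00
    have ha' : (a : MvPolynomial (Fin (2 * n)) k) * (g : MvPolynomial (Fin (2 * n)) k)
        = X i0 * X i1 := by
      have h' := congrArg Subtype.val ha
      simpa [smul_eq_mul] using h'
    have hb' : (b : MvPolynomial (Fin (2 * n)) k) * (g : MvPolynomial (Fin (2 * n)) k)
        = X i0 * X i0 := by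
      have h' := congrArg Subtype.val hb
      simpa [smul_eq_mul] using h'
    rw [hh] at ha' hb'
    have ha2 : (↑a : MvPolynomial (Fin (2 * n)) k) * h = X i1 :=
      mul_left_cancel₀ (X_ne_zero i0) (by rw [← ha']; ring)
    have hb2 : (↑b : MvPolynomial (Fin (2 * n)) k) * h = X i0 :=
      mul_left_cancel₀ (X_ne_zero i0) (by rw [← hb']; ring)
    rcases hXprime.irreducible.isUnit_or_isUnit hb2.symm with hu | hu
    · -- ↑b is a unit, so X i0 divides X i1 : contradiction
      obtain ⟨u, hu⟩ := hu
      set v : MvPolynomial (Fin (2 * n)) k := ((u⁻¹ : (MvPolynomial (Fin (2 * n)) k)ˣ) :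
        MvPolynomial (Fin (2 * n)) k) with hvdef
      have hhu : h = v * X i0 := by
        have h1 : v * ((b : MvPolynomial (Fin (2 * n)) k) * h) = v * X i0 := by
          rw [hb2]
        rwa [← hu, ← mul_assoc, hvdef, Units.inv_mul, one_mul] at h1
      have hx1 : (X i1 : MvPolynomial (Fin (2 * n)) k)
          = ((a : MvPolynomial (Fin (2 * n)) k) * v) * X i0 := by
        rw [← ha2, hhu]; ring
      have c1 : coeff (Finsupp.single i1 1) (X i1 : MvPolynomial (Fin (2 * n)) k) = 1 :=
        coeff_X_same i1
      rw [hx1, coeff_mul_X', if_neg] at c1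
      · exact one_ne_zero c1.symm
      · intro hmem
        rw [Finsupp.mem_support_iff, Finsupp.single_apply] at hmem
        apply hmem
        rw [if_neg]
        intro hEq
        have : (1 : ℕ) = 0 := congrArg Fin.val hEq
        omega
    · -- h is a unit, so g = c • X i0, contradicting evenness of degrees in R
      have hc : constantCoeff h ≠ 0 := (hu.map constantCoeff).ne_zero
      have hcoeff : coeff (Finsupp.single i0 1) (↑g : MvPolynomial (Fin (2 * n)) k)
          = constantCoeff h := by
        rw [hh, show Finsupp.single i0 1 = Finsupp.single i0 1 + 0 from (add_zero _).symm,
          coeff_X_mul]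
        rfl
      have hgR : (g : MvPolynomial (Fin (2 * n)) k) ∈
          Algebra.adjoin k {p | ∃ i j : Fin (2 * n), p = X i * X j} := by
        rw [← hR]; exact g.2
      have heven := veronese_even hgR (Finsupp.single i0 1)
        (by rw [hcoeff]; exact hc)
      rw [Finsupp.sum_single_index rfl] at heven
      exact (Nat.not_even_iff_odd.mpr odd_one) heven
  · -- linear independence mod m²
    intro e he c hsum j
    rw [hm, pow_two] at hsum
    have hcoe : ((∑ j', c j' • e j' : ↥R) : MvPolynomial (Fin (2 * n)) k)
        = ∑ j', c j' • (X i0 * X j' : MvPolynomial (Fin (2 * n)) k) := by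
      have h1 : ((∑ j', c j' • e j' : ↥R) : MvPolynomial (Fin (2 * n)) k)
          = R.val.toLinearMap (∑ j', c j' • e j') := rfl
      rw [h1, map_sum]
      refine Finset.sum_congr rfl fun j' _ => ?_
      rw [map_smul]
      exact congrArg _ (he j')
    have h4 := veronese_m2_coeff hsum (Finsupp.single i0 1 + Finsupp.single j 1)
      (by rw [veronese_deg_add, Finsupp.sum_single_index rfl, Finsupp.sum_single_index rfl]
          omega)
    rw [hcoe, MvPolynomial.coeff_sum] at h4
    have hterm : ∀ j' : Fin (2 * n),
        coeff (Finsupp.single i0 1 + Finsupp.single j 1)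
          (c j' • (X i0 * X j' : MvPolynomial (Fin (2 * n)) k))
        = if j' = j then c j' else 0 := by
      intro j'
      rw [coeff_smul, veronese_X_mul_X, coeff_monomial]
      by_cases hjj : j' = j
      · subst hjj
        simp
      · rw [if_neg hjj, if_neg]
        · simp
        · intro hEq
          exact hjj (Finsupp.single_left_injective one_ne_zero (add_left_cancel hEq))
    rw [Finset.sum_congr rfl (fun j' _ => hterm j'), Finset.sum_ite_eq' Finset.univ j c] at h4
    simpa using h4
end

section
/- For any Lagrangians L₁, L₂ of M, the composite F_{L₂,L₁} ∘ F_{L₁,L₂} : S_{L₁,ψ} → S_{L₁,ψ} equals multiplication by the scalar q^{d + dim(L₁∩L₂)}; in particular F_{L₁,L₂} : S_{L₁,ψ} → S_{L₂,ψ} is a linear isomorphism. -/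
open scoped BigOperators

variable {k : Type*} [Field k] [Fintype k] {M : Type*} [AddCommGroup M] [Module k M]

/-- Multiplication of the Heisenberg group `H(M) = M × k` attached to the symplectic
form `ω`: `(m,a)·(m′,a′) = (m+m′, a+a′+(1/2)ω(m,m′))`. -/
def hmul (ω : M →ₗ[k] M →ₗ[k] k) (x y : M × k) : M × k :=
  (x.1 + y.1, x.2 + y.2 + (2 : k)⁻¹ * ω x.1 y.1)

/-- `L` is a Lagrangian of the `2d`-dimensional symplectic space `(M, ω)`:
a `d`-dimensional subspace on which `ω` vanishes. -/
def IsLagrangian (ω : M →ₗ[k] M →ₗ[k] k) (d : ℕ) (L : Submodule k M) : Prop :=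
  Module.finrank k L = d ∧ ∀ l ∈ L, ∀ l' ∈ L, ω l l' = 0

/-- `f` belongs to `S_{L,ψ}`: `f((l,a)·h) = ψ(a)·f(h)` for `l ∈ L`, `a ∈ k`, `h ∈ H(M)`. -/
def InS (ω : M →ₗ[k] M →ₗ[k] k) (ψ : k → ℂ) (L : Submodule k M)
    (f : M × k → ℂ) : Prop :=
  ∀ l ∈ L, ∀ (a : k) (h : M × k), f (hmul ω (l, a) h) = ψ a * f h

/-- The intertwiner `F_{·,L₂}`: `(F_{L₁,L₂}f)(h) = ∑_{z ∈ L₂} f((z,0)·h)`. -/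
noncomputable def interF (ω : M →ₗ[k] M →ₗ[k] k) (L₂ : Submodule k M)
    (f : M × k → ℂ) : M × k → ℂ :=
  fun h => ∑ᶠ z ∈ (L₂ : Set M), f (hmul ω (z, 0) h)

section AuxiliaryLemmas

set_option linter.unusedSectionVars false

open Module

lemma hmul_assoc (ω : M →ₗ[k] M →ₗ[k] k) (x y z : M × k) :
    hmul ω (hmul ω x y) z = hmul ω x (hmul ω y z) := by
  simp only [hmul, Prod.mk.injEq, map_add, LinearMap.add_apply]
  exact ⟨add_assoc _ _ _, by ring⟩

lemma skew_of_alt (ω : M →ₗ[k] M →ₗ[k] k) (halt : ∀ m : M, ω m m = 0) (a b : M) :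
    ω a b = - ω b a := by
  have h := halt (a + b)
  simp only [map_add, LinearMap.add_apply, halt a, halt b] at h
  linear_combination h

lemma hmul_key (ω : M →ₗ[k] M →ₗ[k] k) (two_ne : (2:k) ≠ 0)
    (halt : ∀ m : M, ω m m = 0) (z w : M) :
    hmul ω (z, 0) (w, 0) = hmul ω (w, ω z w) (z, 0) := by
  have hsk : ω w z = - ω z w := skew_of_alt ω halt w z
  simp only [hmul, Prod.mk.injEq]
  refine ⟨add_comm z w, ?_⟩
  rw [hsk]
  field_simp
  ring

/-- The finset of elements of a submodule of a finite module. -/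
noncomputable def LF [Fintype M] (L : Submodule k M) : Finset M :=
  Set.Finite.toFinset (Set.toFinite (L : Set M))

lemma mem_LF [Fintype M] {L : Submodule k M} {x : M} : x ∈ LF L ↔ x ∈ L :=
  Set.Finite.mem_toFinset _

lemma interF_apply [Fintype M] (ω : M →ₗ[k] M →ₗ[k] k) (L : Submodule k M)
    (f : M × k → ℂ) (h : M × k) :
    interF ω L f h = ∑ z ∈ LF L, f (hmul ω (z, 0) h) :=
  finsum_mem_eq_finite_toFinset_sum _ (Set.toFinite _)

lemma card_LF [Fintype M] (L : Submodule k M) :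
    (LF L).card = Fintype.card k ^ finrank k L := by
  classical
  calc (LF L).card = Fintype.card (LF L) := (Fintype.card_coe _).symm
    _ = Fintype.card L := Fintype.card_congr (Equiv.subtypeEquivRight fun x => mem_LF)
    _ = Fintype.card k ^ finrank k L := card_eq_pow_finrank (K := k)

lemma sum_psi_eq_zero [Fintype M] {ψ : k → ℂ}
    (hψadd : ∀ a b : k, ψ (a + b) = ψ a * ψ b)
    {b : k} (hb : ψ b ≠ 1) (L : Submodule k M) (φ : M →ₗ[k] k)
    (hφ : ¬ ∀ w ∈ L, φ w = 0) :
    ∑ w ∈ LF L, ψ (φ w) = 0 := by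
  push_neg at hφ
  obtain ⟨w₀, hw₀, hc⟩ := hφ
  set w₁ : M := ((φ w₀)⁻¹ * b) • w₀ with hw₁def
  have hw₁ : w₁ ∈ L := L.smul_mem _ hw₀
  have hφw₁ : φ w₁ = b := by
    rw [hw₁def, map_smul, smul_eq_mul]
    field_simp
  have key : ∑ w ∈ LF L, ψ (φ (w₁ + w)) = ∑ w ∈ LF L, ψ (φ w) := by
    refine Finset.sum_equiv (Equiv.addLeft w₁) (fun i => ?_) (fun i _ => rfl)
    simp only [mem_LF, Equiv.coe_addLeft]
    constructor
    · intro hi; exact L.add_mem hw₁ hi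
    · intro hi
      have := L.sub_mem hi hw₁
      simpa using this
  have key2 : ∑ w ∈ LF L, ψ (φ (w₁ + w)) = ψ b * ∑ w ∈ LF L, ψ (φ w) := by
    rw [Finset.mul_sum]
    refine Finset.sum_congr rfl fun w _ => ?_
    rw [map_add, hψadd, hφw₁]
  have : (ψ b - 1) * ∑ w ∈ LF L, ψ (φ w) = 0 := by
    rw [sub_mul, one_mul, ← key2, key, sub_self]
  rcases mul_eq_zero.mp this with h | h
  · exact absurd (by linear_combination h) hb
  · exact h

lemma perp_eq [Fintype M] (d : ℕ) (ω : M →ₗ[k] M →ₗ[k] k)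
    (hdim : finrank k M = 2 * d)
    (hnd : ∀ m : M, (∀ m' : M, ω m m' = 0) → m = 0)
    (L : Submodule k M) (hL : IsLagrangian ω d L) (z : M) :
    (∀ w ∈ L, ω z w = 0) ↔ z ∈ L := by
  classical
  let Φ : M →ₗ[k] Module.Dual k L :=
    { toFun := fun m => (ω m).domRestrict L
      map_add' := fun a b => by ext x; simp
      map_smul' := fun c a => by ext x; simp }
  have hΦ : ∀ (m : M) (x : L), Φ m x = ω m x := fun m x => rfl
  have hsurj : Function.Surjective Φ := by
    intro g
    obtain ⟨g', hg'⟩ := LinearMap.exists_extend g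
    have hinj : Function.Injective ω := by
      intro a b hab
      have : a - b = 0 := hnd (a - b) fun m' => by
        rw [map_sub, LinearMap.sub_apply, hab, sub_self]
      exact sub_eq_zero.mp this
    have hωsurj : Function.Surjective ω :=
      (LinearMap.injective_iff_surjective_of_finrank_eq_finrank
        (by rw [Subspace.dual_finrank_eq])).mp hinj
    obtain ⟨m, hm⟩ := hωsurj g'
    refine ⟨m, ?_⟩
    ext x
    rw [hΦ, hm]
    exact LinearMap.congr_fun hg' x
  have hle : L ≤ LinearMap.ker Φ := by
    intro z hz
    rw [LinearMap.mem_ker]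
    ext x
    exact hL.2 z hz x x.2
  have hker : L = LinearMap.ker Φ := by
    refine Submodule.eq_of_le_of_finrank_eq hle ?_
    have h1 := LinearMap.finrank_range_add_finrank_ker Φ
    rw [LinearMap.range_eq_top.mpr hsurj, finrank_top, Subspace.dual_finrank_eq,
      hL.1, hdim] at h1
    rw [hL.1]
    omega
  constructor
  · intro hz
    rw [hker, LinearMap.mem_ker]
    ext x
    exact hz x x.2
  · intro hz w hw
    exact hL.2 z hz w hw

lemma InS_interF [Fintype M] (ω : M →ₗ[k] M →ₗ[k] k) {ψ : k → ℂ}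
    (L₁ L₂ : Submodule k M)
    (hL₂iso : ∀ l ∈ L₂, ∀ l' ∈ L₂, ω l l' = 0)
    {f : M × k → ℂ} (hf : InS ω ψ L₁ f) :
    InS ω ψ L₂ (interF ω L₂ f) := by
  intro l hl a h
  rw [interF_apply, interF_apply, Finset.mul_sum]
  refine Finset.sum_equiv (Equiv.addRight l) (fun i => ?_) (fun z hz => ?_)
  · simp only [mem_LF, Equiv.coe_addRight]
    constructor
    · intro hi; exact L₂.add_mem hi hl
    · intro hi
      have := L₂.sub_mem hi hl
      simpa using this
  · have hzL : z ∈ L₂ := mem_LF.mp hz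
    rw [← hmul_assoc]
    have h1 : hmul ω (z, 0) (l, a) = hmul ω (0, a) (z + l, 0) := by
      simp [hmul, hL₂iso z hzL l hl]
    rw [h1, hmul_assoc]
    exact hf 0 L₁.zero_mem a _

lemma InS_smul [Fintype M] (ω : M →ₗ[k] M →ₗ[k] k) {ψ : k → ℂ}
    {L : Submodule k M} (c : ℂ) {f : M × k → ℂ} (hf : InS ω ψ L f) :
    InS ω ψ L (c • f) := by
  intro l hl a h
  simp only [Pi.smul_apply, smul_eq_mul, hf l hl a h]
  ring

lemma interF_smul [Fintype M] (ω : M →ₗ[k] M →ₗ[k] k) (L : Submodule k M)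
    (c : ℂ) (f : M × k → ℂ) :
    interF ω L (c • f) = c • interF ω L f := by
  funext h
  rw [Pi.smul_apply, smul_eq_mul, interF_apply, interF_apply, Finset.mul_sum]
  exact Finset.sum_congr rfl fun z _ => rfl

lemma key_lemma [Fintype M] (two_ne : (2:k) ≠ 0) {ψ : k → ℂ}
    (hψadd : ∀ a b : k, ψ (a + b) = ψ a * ψ b) (hψ0 : ψ 0 = 1)
    {b : k} (hb : ψ b ≠ 1) (d : ℕ) (ω : M →ₗ[k] M →ₗ[k] k)
    (hdim : finrank k M = 2 * d)
    (halt : ∀ m : M, ω m m = 0)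
    (hnd : ∀ m : M, (∀ m' : M, ω m m' = 0) → m = 0)
    (L₁ L₂ : Submodule k M)
    (hL₁ : IsLagrangian ω d L₁) (hL₂ : IsLagrangian ω d L₂)
    (f : M × k → ℂ) (hf : InS ω ψ L₁ f) :
    interF ω L₁ (interF ω L₂ f)
      = ((Fintype.card k : ℂ) ^ (d + finrank k ↥(L₁ ⊓ L₂))) • f := by
  classical
  funext h
  rw [Pi.smul_apply, smul_eq_mul, interF_apply]
  have step1 : ∀ w ∈ LF L₁, interF ω L₂ f (hmul ω (w, 0) h)
      = ∑ z ∈ LF L₂, ψ (ω z w) * f (hmul ω (z, 0) h) := by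
    intro w hw
    rw [interF_apply]
    refine Finset.sum_congr rfl fun z hz => ?_
    rw [← hmul_assoc, hmul_key ω two_ne halt z w, hmul_assoc]
    exact hf w (mem_LF.mp hw) (ω z w) _
  rw [Finset.sum_congr rfl step1, Finset.sum_comm]
  have step2 : ∀ z ∈ LF L₂, (∑ w ∈ LF L₁, ψ (ω z w) * f (hmul ω (z, 0) h))
      = (if z ∈ L₁ then ((Fintype.card k : ℂ) ^ d) * f h else 0) := by
    intro z hz
    rw [← Finset.sum_mul]
    by_cases hzL : z ∈ L₁
    · rw [if_pos hzL]
      have hone : ∀ w ∈ LF L₁, ψ (ω z w) = 1 := fun w hw => by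
        rw [hL₁.2 z hzL w (mem_LF.mp hw), hψ0]
      have hfz : f (hmul ω (z, 0) h) = f h := by
        rw [hf z hzL 0 h, hψ0, one_mul]
      rw [Finset.sum_congr rfl hone, Finset.sum_const, card_LF, hL₁.1, hfz]
      simp [nsmul_eq_mul]
    · rw [if_neg hzL]
      have h0 : ∑ w ∈ LF L₁, ψ (ω z w) = 0 :=
        sum_psi_eq_zero hψadd hb L₁ (ω z)
          (fun hall => hzL ((perp_eq d ω hdim hnd L₁ hL₁ z).mp hall))
      rw [h0, zero_mul]
  rw [Finset.sum_congr rfl step2, ← Finset.sum_filter, Finset.sum_const]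
  have hfil : (LF L₂).filter (· ∈ L₁) = LF (L₁ ⊓ L₂) := by
    ext x
    simp only [Finset.mem_filter, mem_LF, Submodule.mem_inf]
    tauto
  rw [hfil, card_LF]
  push_cast
  ring

end AuxiliaryLemmas

/-- For Lagrangians `L₁, L₂` of the `2d`-dimensional symplectic space `M`, the composite
`F_{L₂,L₁} ∘ F_{L₁,L₂} : S_{L₁,ψ} → S_{L₁,ψ}` is multiplication by `q^{d + dim(L₁∩L₂)}`;
in particular `F_{L₁,L₂} : S_{L₁,ψ} → S_{L₂,ψ}` is a (linear) isomorphism. -/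
theorem interF_comp_interF_eq_card_pow_smul {k : Type*} [Field k] [Fintype k]
    {M : Type*} [AddCommGroup M] [Module k M] [Fintype M]
    (hodd : Odd (Fintype.card k))
    (ψ : k → ℂ) (hψadd : ∀ a b : k, ψ (a + b) = ψ a * ψ b) (hψnt : ∃ a : k, ψ a ≠ 1)
    (d : ℕ) (ω : M →ₗ[k] M →ₗ[k] k)
    (hdim : Module.finrank k M = 2 * d)
    (halt : ∀ m : M, ω m m = 0)
    (hnd : ∀ m : M, (∀ m' : M, ω m m' = 0) → m = 0)
    (L₁ L₂ : Submodule k M)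
    (hL₁ : IsLagrangian ω d L₁) (hL₂ : IsLagrangian ω d L₂) :
    (∀ f : M × k → ℂ, InS ω ψ L₁ f →
      interF ω L₁ (interF ω L₂ f)
        = ((Fintype.card k : ℂ) ^ (d + Module.finrank k ↥(L₁ ⊓ L₂))) • f) ∧
    Set.BijOn (interF ω L₂) {f : M × k → ℂ | InS ω ψ L₁ f}
      {f : M × k → ℂ | InS ω ψ L₂ f} := by
  classical
  by_cases hψ0 : ψ 0 = 1
  · -- main case
    have two_ne : (2 : k) ≠ 0 := by
      intro h2
      have hch : ringChar k ∣ 2 := by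
        have h2' : ((2 : ℕ) : k) = 0 := by push_cast; exact h2
        exact (CharP.cast_eq_zero_iff k (ringChar k) 2).mp h2'
      have hch2 : ringChar k = 2 := by
        rcases (Nat.dvd_prime Nat.prime_two).mp hch with h1 | h2'
        · exfalso
          have : ((1 : ℕ) : k) = 0 := by
            rw [← h1]
            exact (CharP.cast_eq_zero k (ringChar k))
          simp at this
        · exact h2'
      have := FiniteField.even_card_of_char_two hch2
      have hodd' := Nat.odd_iff.mp hodd
      omega
    obtain ⟨b, hb⟩ := hψnt
    set q : ℂ := (Fintype.card k : ℂ) with hq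
    set e : ℕ := Module.finrank k ↥(L₁ ⊓ L₂) with he
    have einf : Module.finrank k ↥(L₂ ⊓ L₁) = e := by rw [he, inf_comm]
    have hc : (q ^ (d + e) : ℂ) ≠ 0 := by
      apply pow_ne_zero
      rw [hq]
      exact_mod_cast Fintype.card_ne_zero
    have key12 : ∀ f : M × k → ℂ, InS ω ψ L₁ f →
        interF ω L₁ (interF ω L₂ f) = (q ^ (d + e)) • f :=
      fun f hf => key_lemma two_ne hψadd hψ0 hb d ω hdim halt hnd L₁ L₂ hL₁ hL₂ f hf
    have key21 : ∀ g : M × k → ℂ, InS ω ψ L₂ g →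
        interF ω L₂ (interF ω L₁ g) = (q ^ (d + e)) • g := by
      intro g hg
      have := key_lemma two_ne hψadd hψ0 hb d ω hdim halt hnd L₂ L₁ hL₂ hL₁ g hg
      rwa [einf] at this
    refine ⟨key12, ?_, ?_, ?_⟩
    · -- MapsTo
      intro f hf
      exact InS_interF ω L₁ L₂ hL₂.2 hf
    · -- InjOn
      intro f hf g hg heq
      have h1 : (q ^ (d + e)) • f = (q ^ (d + e)) • g := by
        rw [← key12 f hf, ← key12 g hg, heq]
      exact smul_right_injective _ hc h1
    · -- SurjOn
      intro g hg
      refine ⟨(q ^ (d + e))⁻¹ • interF ω L₁ g, ?_, ?_⟩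
      · exact InS_smul ω _ (InS_interF ω L₂ L₁ hL₁.2 hg)
      · rw [interF_smul, key21 g hg, smul_smul, inv_mul_cancel₀ hc, one_smul]
  · -- degenerate case: ψ vanishes identically
    have hψz : ∀ a : k, ψ a = 0 := by
      have h00 : ψ 0 * ψ 0 = ψ 0 := by
        rw [← hψadd, add_zero]
      have h0 : ψ 0 = 0 := by
        rcases mul_eq_zero.mp (by linear_combination h00 : ψ 0 * (ψ 0 - 1) = 0) with h | h
        · exact h
        · exact absurd (by linear_combination h) hψ0
      intro a
      have := hψadd a 0
      rw [add_zero, h0, mul_zero] at this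
      exact this
    have hzero : ∀ (L : Submodule k M) (f : M × k → ℂ), InS ω ψ L f → f = 0 := by
      intro L f hf
      funext h
      have h1 := hf 0 L.zero_mem 0 h
      have h2 : hmul ω (0, (0:k)) h = h := by
        simp [hmul]
      rw [h2, hψz, zero_mul] at h1
      simpa using h1
    have hF0 : ∀ L : Submodule k M, interF ω L (0 : M × k → ℂ) = 0 := by
      intro L
      funext h
      rw [interF_apply]
      simp
    have hInS0 : ∀ L : Submodule k M, InS ω ψ L (0 : M × k → ℂ) := by
      intro L l hl a h
      simp [hψz]
    constructor
    · intro f hf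
      rw [hzero L₁ f hf, hF0, hF0]
      simp
    · refine ⟨?_, ?_, ?_⟩
      · intro f hf
        have : f = 0 := hzero L₁ f hf
        rw [Set.mem_setOf_eq, this, hF0]
        exact hInS0 L₂
      · intro f hf g hg _
        rw [hzero L₁ f hf, hzero L₁ g hg]
      · intro g hg
        refine ⟨0, hInS0 L₁, ?_⟩
        rw [hF0]
        exact (hzero L₂ g hg).symm
end

section
/- For any Lagrangians L₁, L₂, L₃ of M there exists a nonzero scalar θ ∈ ℂ such that F_{L₂,L₁} ∘ F_{L₃,L₂} ∘ F_{L₁,L₃} = θ · id on S_{L₁,ψ}. -/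
open scoped BigOperators

variable {k : Type*} [Field k] [Fintype k] {M : Type*} [AddCommGroup M] [Module k M]

/-- Sum of a multiplicative function over a finite additive group vanishes
if the function takes a value different from `1`. -/
lemma charsum_zero {N : Type*} [AddCommGroup N] [Fintype N] (χ : N → ℂ)
    (hχ : ∀ x y, χ (x + y) = χ x * χ y) (x₀ : N) (h : χ x₀ ≠ 1) :
    ∑ x : N, χ x = 0 := by
  have h1 : χ x₀ * ∑ x : N, χ x = ∑ x : N, χ x := by
    rw [Finset.mul_sum]
    exact Fintype.sum_equiv (Equiv.addLeft x₀) _ _ (fun x => (hχ x₀ x).symm)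
  have h2 : (χ x₀ - 1) * ∑ x : N, χ x = 0 := by
    rw [sub_mul, one_mul, h1, sub_self]
  rcases mul_eq_zero.mp h2 with h3 | h3
  · exact absurd (sub_eq_zero.mp h3) h
  · exact h3

/-- Nonvanishing of a Gauss sum attached to a quadratic map on a finite
vector space in odd characteristic. -/
lemma gauss_sum_ne_zero {k : Type*} [Field k] {V : Type*} [AddCommGroup V] [Module k V]
    [Fintype V]
    (ψ : k → ℂ) (hψadd : ∀ a b, ψ (a + b) = ψ a * ψ b) (hψ0 : ψ 0 = 1)
    (hψnt : ∃ a, ψ a ≠ 1) (h2 : (2 : k) ≠ 0)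
    (Q : V → k) (B : V → V → k)
    (hpol : ∀ u w, Q (u + w) = Q u + Q w + B u w)
    (hBadd : ∀ u w w', B (w + w') u = B w u + B w' u)
    (hBsmul : ∀ (t : k) (u w : V), B (t • w) u = t * B w u)
    (hBuu : ∀ u, B u u = 2 * Q u) :
    (∑ v : V, ψ (Q v)) ≠ 0 := by
  classical
  have hψneg : ∀ a, ψ (-a) * ψ a = 1 := fun a => by
    rw [← hψadd, neg_add_cancel, hψ0]
  have hB0 : ∀ u, B 0 u = 0 := fun u => by
    have := hBsmul 0 u 0
    simpa using this
  have hQ0 : Q 0 = 0 := by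
    have h := hpol 0 0
    rw [add_zero, hB0, add_zero] at h
    exact (right_eq_add.mp h)
  have hBr0 : ∀ w, B w 0 = 0 := fun w => by
    have h := hpol w 0
    rw [add_zero, hQ0, add_zero] at h
    exact (left_eq_add.mp h)
  set S : ℂ := ∑ v : V, ψ (Q v) with hS
  set S' : ℂ := ∑ v : V, ψ (-Q v) with hS'
  have key : S' * S = ∑ u : V, (if ∀ w : V, B w u = 0 then (Fintype.card V : ℂ) else 0) := by
    have step1 : S' * S = ∑ v' : V, ∑ u : V, ψ (Q u) * ψ (B v' u) := by
      rw [hS', Finset.sum_mul]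
      refine Finset.sum_congr rfl (fun v' _ => ?_)
      rw [hS, Finset.mul_sum]
      rw [show ∑ v : V, ψ (-Q v') * ψ (Q v) = ∑ u : V, ψ (-Q v') * ψ (Q (v' + u)) from
        (Fintype.sum_equiv (Equiv.addLeft v') _ _ (fun u => rfl)).symm]
      refine Finset.sum_congr rfl (fun u _ => ?_)
      rw [hpol, hψadd, hψadd, ← mul_assoc, ← mul_assoc, hψneg, one_mul]
    rw [step1, Finset.sum_comm]
    refine Finset.sum_congr rfl (fun u _ => ?_)
    by_cases hu : ∀ w : V, B w u = 0
    · rw [if_pos hu]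
      have hQu : Q u = 0 := by
        have := hBuu u
        rw [hu u] at this
        have := this.symm
        rcases mul_eq_zero.mp this with h | h
        · exact absurd h h2
        · exact h
      simp [hQu, hψ0, hu, Finset.card_univ]
    · rw [if_neg hu]
      push_neg at hu
      obtain ⟨w, hw⟩ := hu
      obtain ⟨a, ha⟩ := hψnt
      have hsum0 : ∑ v' : V, ψ (B v' u) = 0 := by
        refine charsum_zero (fun v' => ψ (B v' u))
          (fun x y => by
            show ψ (B (x + y) u) = ψ (B x u) * ψ (B y u)
            rw [hBadd, hψadd])
          ((a * (B w u)⁻¹) • w) ?_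
        show ψ (B ((a * (B w u)⁻¹) • w) u) ≠ 1
        rw [hBsmul, mul_assoc, inv_mul_cancel₀ hw, mul_one]
        exact ha
      calc ∑ v' : V, ψ (Q u) * ψ (B v' u) = ψ (Q u) * ∑ v' : V, ψ (B v' u) := by
            rw [Finset.mul_sum]
        _ = 0 := by rw [hsum0, mul_zero]
  intro hS0
  rw [hS0, mul_zero] at key
  rw [Finset.sum_ite, Finset.sum_const, Finset.sum_const_zero, add_zero] at key
  have hcard : (0 : ℕ) < (Finset.univ.filter (fun u : V => ∀ w : V, B w u = 0)).card := by
    refine Finset.card_pos.mpr ⟨0, ?_⟩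
    simp only [Finset.mem_filter, Finset.mem_univ, true_and]
    exact hBr0
  have hcV : (Fintype.card V : ℂ) ≠ 0 := by
    exact_mod_cast Fintype.card_ne_zero
  rw [nsmul_eq_mul] at key
  rcases mul_eq_zero.mp key.symm with h | h
  · exact absurd (Nat.cast_eq_zero.mp h) (hcard).ne'
  · exact hcV h


lemma omega_anti {k : Type*} [Field k] {M : Type*} [AddCommGroup M] [Module k M]
    (ω : M →ₗ[k] M →ₗ[k] k) (halt : ∀ m, ω m m = 0) (x y : M) : ω x y = -ω y x := by
  have h := halt (x + y)
  simp only [map_add, LinearMap.add_apply, halt x, halt y] at h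
  linear_combination h

lemma lagr_mem_of_perp {k : Type*} [Field k] {M : Type*} [AddCommGroup M] [Module k M]
    [Fintype M] (d : ℕ) (ω : M →ₗ[k] M →ₗ[k] k) (hdim : Module.finrank k M = 2 * d)
    (halt : ∀ m, ω m m = 0) (hnd : ∀ m, (∀ m', ω m m' = 0) → m = 0)
    (L : Submodule k M) (hL : IsLagrangian ω d L) {m : M} (hm : ∀ l ∈ L, ω l m = 0) :
    m ∈ L := by
  have hfin : Module.Finite k M := ⟨⟨Finset.univ, by rw [Finset.coe_univ, Submodule.span_univ]⟩⟩
  have hrefl : LinearMap.BilinForm.IsRefl ω := fun x y hxy => by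
    rw [omega_anti ω halt y x, hxy, neg_zero]
  have hLle : L ≤ LinearMap.BilinForm.orthogonal ω L := fun x hx n hn => hL.2 n hn x hx
  have hfr : Module.finrank k (LinearMap.BilinForm.orthogonal ω L) = d := by
    rw [LinearMap.BilinForm.finrank_orthogonal
      ⟨hnd, fun y hy => hnd y (fun x => by rw [omega_anti ω halt y x, hy x, neg_zero])⟩, hdim, hL.1]
    omega
  have heq : L = LinearMap.BilinForm.orthogonal ω L :=
    Submodule.eq_of_le_of_finrank_le hLle (by rw [hfr, hL.1])
  rw [heq]
  exact fun n hn => hm n hn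

lemma finsum_mem_submodule {k : Type*} [Field k] {M : Type*} [AddCommGroup M] [Module k M]
    [Fintype M] (L : Submodule k M) [Fintype L] (g : M → ℂ) :
    ∑ᶠ z ∈ (L : Set M), g z = ∑ z : L, g ↑z := by
  classical
  rw [← Set.Finite.coe_toFinset (Set.toFinite (L : Set M)), finsum_mem_coe_finset]
  exact Finset.sum_subtype _ (fun x => by simp only [Set.Finite.mem_toFinset]; exact Iff.rfl) g

lemma sum_subtype_eq_ite {M : Type*} [Fintype M] (p : M → Prop) [DecidablePred p]
    [Fintype {x // p x}] (g : M → ℂ) :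
    ∑ x : {x // p x}, g ↑x = ∑ x : M, if p x then g x else 0 := by
  rw [← Finset.sum_filter]
  exact (Finset.sum_subtype _ (fun x => by simp) g).symm

/-- For any Lagrangians `L₁, L₂, L₃` of `M` there is a nonzero scalar `θ ∈ ℂ` with
`F_{L₂,L₁} ∘ F_{L₃,L₂} ∘ F_{L₁,L₃} = θ·id` on `S_{L₁,ψ}`. -/
theorem intertwiner_triple_scalar {k : Type*} [Field k] [Fintype k]
    {M : Type*} [AddCommGroup M] [Module k M] [Fintype M]
    (hodd : Odd (Fintype.card k))
    (ψ : k → ℂ) (hψadd : ∀ a b : k, ψ (a + b) = ψ a * ψ b) (hψnt : ∃ a : k, ψ a ≠ 1)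
    (d : ℕ) (ω : M →ₗ[k] M →ₗ[k] k)
    (hdim : Module.finrank k M = 2 * d)
    (halt : ∀ m : M, ω m m = 0)
    (hnd : ∀ m : M, (∀ m' : M, ω m m' = 0) → m = 0)
    (L₁ L₂ L₃ : Submodule k M)
    (hL₁ : IsLagrangian ω d L₁) (hL₂ : IsLagrangian ω d L₂) (hL₃ : IsLagrangian ω d L₃) :
    ∃ θ : ℂ, θ ≠ 0 ∧
      ∀ f : M × k → ℂ, InS ω ψ L₁ f →
        interF ω L₁ (interF ω L₂ (interF ω L₃ f)) = θ • f := by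
  classical
  have hψ0 : ψ 0 = 0 ∨ ψ 0 = 1 := by
    have h := hψadd 0 0
    rw [add_zero] at h
    rcases eq_or_ne (ψ 0) 0 with h' | h'
    · exact Or.inl h'
    · exact Or.inr (mul_left_cancel₀ h' (h.symm.trans (mul_one (ψ 0)).symm))
  rcases hψ0 with h0 | h0
  · -- degenerate case : `ψ 0 = 0`, so every `f ∈ S_{L₁,ψ}` vanishes
    refine ⟨1, one_ne_zero, fun f hf => ?_⟩
    have hfz : ∀ h, f h = 0 := by
      intro h
      have hh := hf 0 L₁.zero_mem 0 h
      have he : hmul ω ((0 : M), (0 : k)) h = h := by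
        simp [hmul]
      rw [he, h0, zero_mul] at hh
      exact hh
    funext h
    simp only [interF, finsum_mem_submodule, Pi.smul_apply, one_smul]
    simp [hfz]
  -- main case : `ψ 0 = 1`
  have hanti : ∀ x y : M, ω x y = -ω y x := omega_anti ω halt
  have h2 : (2 : k) ≠ 0 := by
    intro h
    haveI : Fact (Nat.Prime 2) := ⟨Nat.prime_two⟩
    have h21 : addOrderOf (1 : k) = 2 := by
      apply addOrderOf_eq_prime
      · show 2 • (1 : k) = 0
        rw [two_smul, one_add_one_eq_two, h]
      · exact one_ne_zero
    have hdvd : (2 : ℕ) ∣ Fintype.card k := h21 ▸ addOrderOf_dvd_card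
    rcases hodd with ⟨m, hm⟩
    omega
  -- the auxiliary space of triples and its Gauss sum
  set Vm : Submodule k (M × M) :=
    (L₂.prod L₃) ⊓ Submodule.comap (LinearMap.fst k M M + LinearMap.snd k M M) L₁ with hVmdef
  have hVmem : ∀ p : M × M, p ∈ Vm ↔ p.1 ∈ L₂ ∧ p.2 ∈ L₃ ∧ p.1 + p.2 ∈ L₁ := by
    intro p
    simp [hVmdef, Submodule.mem_inf, Submodule.mem_prod, Submodule.mem_comap,
      LinearMap.add_apply, and_assoc]
  set G : ℂ := ∑ v : Vm, ψ ((2 : k)⁻¹ * ω (v : M × M).2 (v : M × M).1) with hG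
  have hGne : G ≠ 0 := by
    rw [hG]
    refine gauss_sum_ne_zero ψ hψadd h0 hψnt h2
      (fun v : Vm => (2 : k)⁻¹ * ω (v : M × M).2 (v : M × M).1)
      (fun u w : Vm => (2 : k)⁻¹ *
        (ω (u : M × M).2 (w : M × M).1 + ω (w : M × M).2 (u : M × M).1)) ?_ ?_ ?_ ?_
    · intro u w
      simp only [Submodule.coe_add, Prod.fst_add, Prod.snd_add, map_add, LinearMap.add_apply]
      ring
    · intro u w w'
      simp only [Submodule.coe_add, Prod.fst_add, Prod.snd_add, map_add, LinearMap.add_apply]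
      ring
    · intro t u w
      simp only [Submodule.coe_smul, Prod.smul_fst, Prod.smul_snd, map_smul,
        LinearMap.smul_apply, smul_eq_mul]
      ring
    · intro u
      field_simp
      ring
  have hcardne : (Fintype.card L₁ : ℂ) ≠ 0 := by
    exact_mod_cast Fintype.card_ne_zero
  refine ⟨(Fintype.card L₁ : ℂ) * G, mul_ne_zero hcardne hGne, fun f hf => ?_⟩
  funext h
  -- the inner character sum over L₁
  have hinner : ∀ m : M, (∑ x : L₁, ψ (-(ω (x : M) m))) =
      if m ∈ L₁ then (Fintype.card L₁ : ℂ) else 0 := by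
    intro m
    by_cases hm : m ∈ L₁
    · rw [if_pos hm]
      have hone : ∀ x : L₁, ψ (-(ω (x : M) m)) = 1 := fun x => by
        rw [hL₁.2 (x : M) x.2 m hm, neg_zero, h0]
      rw [Finset.sum_congr rfl (fun x _ => hone x)]
      simp [Finset.card_univ]
    · rw [if_neg hm]
      have hex : ∃ l ∈ L₁, ω l m ≠ 0 := by
        by_contra hcon
        push_neg at hcon
        exact hm (lagr_mem_of_perp d ω hdim halt hnd L₁ hL₁ hcon)
      obtain ⟨l, hl, hlm⟩ := hex
      obtain ⟨a, ha⟩ := hψnt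
      refine charsum_zero (fun x : L₁ => ψ (-(ω (x : M) m)))
        (fun x y => by
          show ψ (-(ω ((x : M) + (y : M)) m)) = _
          rw [← hψadd]
          congr 1
          rw [map_add, LinearMap.add_apply]
          ring)
        ⟨(-(a * (ω l m)⁻¹)) • l, L₁.smul_mem _ hl⟩ ?_
      show ψ (-(ω ((-(a * (ω l m)⁻¹)) • l) m)) ≠ 1
      rw [map_smul, LinearMap.smul_apply, smul_eq_mul, neg_mul, neg_neg,
        mul_assoc, inv_mul_cancel₀ hlm, mul_one]
      exact ha
  -- rewrite the triple intertwiner as an explicit triple sum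
  have hstep : interF ω L₁ (interF ω L₂ (interF ω L₃ f)) h =
      ∑ x : L₁, ∑ y : L₂, ∑ z : L₃,
        f (hmul ω ((z : M), 0) (hmul ω ((y : M), 0) (hmul ω ((x : M), 0) h))) := by
    simp only [interF, finsum_mem_submodule]
  -- group-theoretic rearrangement of the Heisenberg product
  have hmul_eq : ∀ (x y z : M) (h : M × k),
      hmul ω (z, 0) (hmul ω (y, 0) (hmul ω (x, 0) h)) =
        hmul ω (x, (2 : k)⁻¹ * ω z y + -(ω x (y + z))) (hmul ω (y + z, 0) h) := by
    intro x y z h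
    simp only [hmul, map_add, LinearMap.add_apply, Prod.mk.injEq]
    constructor
    · abel
    · have h2inv : (2 : k)⁻¹ * 2 = 1 := inv_mul_cancel₀ h2
      linear_combination (2 : k)⁻¹ * hanti y x + (2 : k)⁻¹ * hanti z x -
        (ω x y + ω x z) * h2inv
  have hterm : ∀ (x : L₁) (y z : M),
      f (hmul ω (z, 0) (hmul ω (y, 0) (hmul ω ((x : M), 0) h))) =
        ψ ((2 : k)⁻¹ * ω z y) *
          (ψ (-(ω (x : M) (y + z))) * f (hmul ω (y + z, 0) h)) := by
    intro x y z
    rw [hmul_eq, hf (x : M) x.2, hψadd]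
    ring
  rw [hstep]
  have step2 : (∑ x : L₁, ∑ y : L₂, ∑ z : L₃,
        f (hmul ω ((z : M), 0) (hmul ω ((y : M), 0) (hmul ω ((x : M), 0) h)))) =
      ∑ y : L₂, ∑ z : L₃, ψ ((2 : k)⁻¹ * ω (z : M) (y : M)) *
        f (hmul ω ((y : M) + (z : M), 0) h) *
        (if ((y : M) + (z : M)) ∈ L₁ then (Fintype.card L₁ : ℂ) else 0) := by
    rw [Finset.sum_comm]
    refine Finset.sum_congr rfl (fun y _ => ?_)
    rw [Finset.sum_comm]
    refine Finset.sum_congr rfl (fun z _ => ?_)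
    rw [← hinner ((y : M) + (z : M)), Finset.mul_sum]
    refine Finset.sum_congr rfl (fun x _ => ?_)
    rw [hterm x (y : M) (z : M)]
    ring
  rw [step2]
  have step3 : (∑ y : L₂, ∑ z : L₃, ψ ((2 : k)⁻¹ * ω (z : M) (y : M)) *
        f (hmul ω ((y : M) + (z : M), 0) h) *
        (if ((y : M) + (z : M)) ∈ L₁ then (Fintype.card L₁ : ℂ) else 0)) =
      ∑ y : L₂, ∑ z : L₃, (if ((y : M) + (z : M)) ∈ L₁ then
        (Fintype.card L₁ : ℂ) * ψ ((2 : k)⁻¹ * ω (z : M) (y : M)) * f h else 0) := by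
    refine Finset.sum_congr rfl (fun y _ => Finset.sum_congr rfl (fun z _ => ?_))
    by_cases hyz : ((y : M) + (z : M)) ∈ L₁
    · rw [if_pos hyz, if_pos hyz]
      have : f (hmul ω ((y : M) + (z : M), 0) h) = f h := by
        rw [hf ((y : M) + (z : M)) hyz 0 h, h0, one_mul]
      rw [this]
      ring
    · rw [if_neg hyz, if_neg hyz, mul_zero]
  rw [step3]
  -- pass to sums over all of `M` with indicators, and identify with the Gauss sum
  have expand2 : ∀ g : M → ℂ, (∑ y : L₂, g (y : M)) = ∑ m : M, if m ∈ L₂ then g m else 0 :=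
    fun g => sum_subtype_eq_ite (· ∈ L₂) g
  have expand3 : ∀ g : M → ℂ, (∑ z : L₃, g (z : M)) = ∑ n : M, if n ∈ L₃ then g n else 0 :=
    fun g => sum_subtype_eq_ite (· ∈ L₃) g
  have expandV : ∀ g : M × M → ℂ, (∑ v : Vm, g (v : M × M)) =
      ∑ p : M × M, if p ∈ Vm then g p else 0 :=
    fun g => sum_subtype_eq_ite (· ∈ Vm) g
  have lhs_eq : (∑ y : L₂, ∑ z : L₃, (if ((y : M) + (z : M)) ∈ L₁ then
        (Fintype.card L₁ : ℂ) * ψ ((2 : k)⁻¹ * ω (z : M) (y : M)) * f h else 0)) =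
      ∑ m : M, ∑ n : M, (if m ∈ L₂ then (if n ∈ L₃ then (if m + n ∈ L₁ then
        (Fintype.card L₁ : ℂ) * ψ ((2 : k)⁻¹ * ω n m) * f h else 0) else 0) else 0) := by
    rw [expand2 (fun m => ∑ z : L₃, (if m + (z : M) ∈ L₁ then
      (Fintype.card L₁ : ℂ) * ψ ((2 : k)⁻¹ * ω (z : M) m) * f h else 0))]
    refine Finset.sum_congr rfl (fun m _ => ?_)
    by_cases hm : m ∈ L₂
    · rw [if_pos hm]
      simp only [if_pos hm]
      exact expand3 (fun n => if m + n ∈ L₁ then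
        (Fintype.card L₁ : ℂ) * ψ ((2 : k)⁻¹ * ω n m) * f h else 0)
    · rw [if_neg hm]
      simp only [if_neg hm]
      rw [Finset.sum_const_zero]
  rw [lhs_eq]
  have rhs_eq : ((Fintype.card L₁ : ℂ) * G) • f h =
      ∑ m : M, ∑ n : M, (if (m, n) ∈ Vm then
        (Fintype.card L₁ : ℂ) * ψ ((2 : k)⁻¹ * ω n m) * f h else 0) := by
    rw [smul_eq_mul, hG, expandV (fun p : M × M => ψ ((2 : k)⁻¹ * ω p.2 p.1))]
    rw [Finset.mul_sum, Finset.sum_mul, Fintype.sum_prod_type]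
    refine Finset.sum_congr rfl (fun m _ => Finset.sum_congr rfl (fun n _ => ?_))
    by_cases hp : (m, n) ∈ Vm
    · rw [if_pos hp, if_pos hp]
    · rw [if_neg hp, if_neg hp, mul_zero, zero_mul]
  rw [Pi.smul_apply, rhs_eq]
  refine Finset.sum_congr rfl (fun m _ => Finset.sum_congr rfl (fun n _ => ?_))
  by_cases h2m : m ∈ L₂ <;> by_cases h3n : n ∈ L₃ <;> by_cases h1mn : m + n ∈ L₁ <;>
    simp [hVmem (m, n), h2m, h3n, h1mn]
end
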